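/- Let n ≥ 2, θ ∈ ℝ, L > 0, ζ_n = exp(2πi/n), and set μ_j = 2cos(θ + 2π(j−1)/n) for j = 1, …, n. Let δ : [0, L] → ℝ be a continuous function with s < δ(s) for all s ∈ [0, L]. Then for every C > 0 there exist C′ > 0 and t₀ > 0 such that for all t ≥ t₀ the following holds: if R : [0,L] → M_n(ℂ) is continuous with |R(s)_{kl}| ≤ C · t^{−1/(2n)} · e^{−2|1 − ζ_n^{k−l}| · t^{1/n} · δ(s)} for all s and all 1 ≤ k, l ≤ n, and Φ : [0,L] → M_n(ℂ) is differentiable with Φ(0) = Id and Φ′(s) = (t^{1/n}·diag(μ₁,…,μ_n) + R(s))·Φ(s) for all s ∈ [0,L], then ‖diag(e^{−L t^{1/n} μ₁}, …, e^{−L t^{1/n} μ_n}) · Φ(L) − Id‖ ≤ C′ · t^{−1/(2n)}. -/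

import Mathlib

/-!
Write `b_j = t^{1/n} μ_j` and conjugate by the gauge `E(s) = diag(e^{-s b_j})`: then
`Ψ = EΦ` solves `Ψ' = (E R E⁻¹) Ψ`, `Ψ(0) = 1`, and the `(k, l)` entry of `E R E⁻¹` is
`e^{s (b_l - b_k)} R_{kl}`. Since `μ_l - μ_k` is twice the real part of `e^{iα_l} - e^{iα_k}`
(`α_j = θ + 2πj/n`), it is at most `2|1 - ζ_n^{k-l}|`; together with `s < δ(s)` the decay
assumed of `R_{kl}` beats this exponential growth, so `‖E R E⁻¹‖ ≤ K := n C t^{-1/(2n)}`.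
Grönwall's inequality gives `‖Ψ(L) - 1‖ ≤ e^{KL} - 1 ≤ K L e^{KL}`, and `K ≤ n C` for `t ≥ 1`.
-/

open Set

attribute [local instance] Matrix.linftyOpNormedAddCommGroup Matrix.linftyOpNormedRing
  Matrix.linftyOpNormedAlgebra

noncomputable def zeta (n : ℕ) : ℂ := Complex.exp (2 * Real.pi * Complex.I / n)

open Matrix

theorem Real.exp_sub_one_le_mul_exp (x : ℝ) : Real.exp x - 1 ≤ x * Real.exp x := by
  have h := mul_le_mul_of_nonneg_right (Real.add_one_le_exp (-x)) (Real.exp_pos x).le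
  rw [← Real.exp_add, neg_add_cancel, Real.exp_zero] at h
  linarith

theorem Real.cos_sub_cos_le_norm_one_sub_exp (A B : ℝ) :
    Real.cos A - Real.cos B ≤ ‖1 - Complex.exp (↑(B - A) * Complex.I)‖ := by
  have hfactor : Complex.exp (A * Complex.I) - Complex.exp (B * Complex.I)
      = Complex.exp (A * Complex.I) * (1 - Complex.exp (↑(B - A) * Complex.I)) := by
    rw [mul_sub, mul_one, ← Complex.exp_add]
    push_cast
    ring_nf
  calc Real.cos A - Real.cos B
      = (Complex.exp (A * Complex.I) - Complex.exp (B * Complex.I)).re := by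
        rw [Complex.sub_re, Complex.exp_ofReal_mul_I_re, Complex.exp_ofReal_mul_I_re]
    _ ≤ ‖Complex.exp (A * Complex.I) - Complex.exp (B * Complex.I)‖ := Complex.re_le_norm _
    _ = _ := by rw [hfactor, norm_mul, Complex.norm_exp_ofReal_mul_I, one_mul]

theorem zeta_zpow (n : ℕ) (m : ℤ) :
    zeta n ^ m = Complex.exp (↑(2 * Real.pi * m / n) * Complex.I) := by
  rw [zeta, ← Complex.exp_int_mul]
  push_cast
  ring_nf

theorem two_cos_sub_two_cos_le_norm_one_sub_zeta_zpow (n k l : ℕ) (θ : ℝ) :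
    2 * Real.cos (θ + 2 * Real.pi * l / n) - 2 * Real.cos (θ + 2 * Real.pi * k / n)
      ≤ 2 * ‖1 - zeta n ^ ((k : ℤ) - (l : ℤ))‖ := by
  have harg : 2 * Real.pi * (((k : ℤ) - (l : ℤ) : ℤ) : ℝ) / n
      = (θ + 2 * Real.pi * k / n) - (θ + 2 * Real.pi * l / n) := by
    push_cast
    ring
  rw [zeta_zpow, harg, ← mul_sub]
  exact mul_le_mul_of_nonneg_left (Real.cos_sub_cos_le_norm_one_sub_exp _ _) zero_le_two

theorem Matrix.linfty_opNorm_le_card_mul {m n α : Type*} [Fintype m] [Fintype n]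
    [NormedAddCommGroup α] (A : Matrix m n α) {c : ℝ} (hc : 0 ≤ c)
    (h : ∀ i j, ‖A i j‖ ≤ c) :
    ‖A‖ ≤ Fintype.card n * c := by
  lift c to NNReal using hc
  rw [linfty_opNorm_def]
  have hrow : (Finset.univ.sup fun i => ∑ j, ‖A i j‖₊) ≤ Fintype.card n * c :=
    Finset.sup_le fun i _ => calc
      ∑ j, ‖A i j‖₊ ≤ ∑ _j : n, c := Finset.sum_le_sum fun j _ => h i j
      _ = Fintype.card n * c := by simp
  exact_mod_cast hrow

theorem hasDerivAt_diagonal {m α : Type*} [Fintype m] [DecidableEq m] [NormedRing α]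
    [NormedAlgebra ℝ α] {f : ℝ → m → α} {f' : m → α} {x : ℝ}
    (h : ∀ i, HasDerivAt (fun y => f y i) (f' i) x) :
    HasDerivAt (fun y => diagonal (f y)) (diagonal f') x := by
  let e : (m → α) →L[ℝ] Matrix m m α :=
    (diagonalLinearMap m ℝ α).mkContinuous 1 fun v => by simp [linfty_opNorm_diagonal]
  exact e.hasFDerivAt.comp_hasDerivAt x (hasDerivAt_pi.2 h)

theorem HasDerivWithinAt.gauge_mul {𝔸 : Type*} [NormedRing 𝔸] [NormedAlgebra ℝ 𝔸]
    {E Φ : ℝ → 𝔸} {D R F : 𝔸} {s : Set ℝ} {x : ℝ}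
    (hE : HasDerivWithinAt E (-(D * E x)) s x) (hΦ : HasDerivWithinAt Φ ((D + R) * Φ x) s x)
    (hcomm : Commute (E x) D) (hinv : F * E x = 1) :
    HasDerivWithinAt (fun y => E y * Φ y) (E x * R * F * (E x * Φ x)) s x := by
  convert hE.fun_mul hΦ using 1
  rw [mul_assoc (E x * R), ← mul_assoc F, hinv, one_mul, ← mul_assoc, mul_add, hcomm.eq]
  noncomm_ring

theorem gronwallBound_zero_self (K x : ℝ) : gronwallBound 0 K K x = Real.exp (K * x) - 1 := by
  rcases eq_or_ne K 0 with rfl | hK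
  · simp [gronwallBound_K0]
  · simp [gronwallBound_of_K_ne_0 hK, hK]

theorem norm_sub_one_le_exp_sub_one_of_deriv_eq_mul {𝔸 : Type*} [NormedRing 𝔸]
    [NormOneClass 𝔸] [NormedSpace ℝ 𝔸] {Ψ B : ℝ → 𝔸} {K L : ℝ} (hL : 0 ≤ L)
    (hΨ0 : Ψ 0 = 1)
    (hΨ : ∀ s ∈ Icc 0 L, HasDerivWithinAt Ψ (B s * Ψ s) (Icc 0 L) s)
    (hB : ∀ s ∈ Icc 0 L, ‖B s‖ ≤ K) :
    ‖Ψ L - 1‖ ≤ Real.exp (K * L) - 1 := by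
  have hcont : ContinuousOn (fun s => Ψ s - 1) (Icc 0 L) :=
    fun s hs => (hΨ s hs).continuousWithinAt.sub continuousWithinAt_const
  have hderiv (s) (hs : s ∈ Ico 0 L) :
      HasDerivWithinAt (fun s => Ψ s - 1) (B s * Ψ s) (Ici s) s :=
    ((hΨ s (Ico_subset_Icc_self hs)).sub_const 1).mono_of_mem_nhdsWithin
      (Icc_mem_nhdsGE_of_mem hs)
  have hbound (s) (hs : s ∈ Ico 0 L) : ‖B s * Ψ s‖ ≤ K * ‖Ψ s - 1‖ + K := by
    have hBs := hB s (Ico_subset_Icc_self hs)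
    calc ‖B s * Ψ s‖ ≤ ‖B s‖ * ‖Ψ s‖ := norm_mul_le _ _
      _ ≤ K * (‖Ψ s - 1‖ + ‖(1 : 𝔸)‖) :=
        mul_le_mul hBs (norm_le_norm_sub_add _ _) (norm_nonneg _) ((norm_nonneg _).trans hBs)
      _ = K * ‖Ψ s - 1‖ + K := by rw [norm_one]; ring
  have hΨ0' : ‖Ψ 0 - 1‖ ≤ 0 := by simp [hΨ0]
  simpa [gronwallBound_zero_self] using
    norm_le_gronwallBound_of_norm_deriv_right_le hcont hderiv hΨ0' hbound L (right_mem_Icc.2 hL)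

section Gauge

variable {m : Type*} [DecidableEq m]

noncomputable def diagGauge (b : m → ℝ) (s : ℝ) : Matrix m m ℂ :=
  diagonal fun j => ((Real.exp (-(s * b j)) : ℝ) : ℂ)

variable [Fintype m]

theorem diagGauge_neg_mul_diagGauge (b : m → ℝ) (s : ℝ) :
    diagGauge b (-s) * diagGauge b s = 1 := by
  rw [diagGauge, diagGauge, diagonal_mul_diagonal, ← diagonal_one]
  congr 1
  ext j
  rw [← Complex.ofReal_mul, ← Real.exp_add]
  simp

theorem commute_diagGauge_diagonal (b : m → ℝ) (s : ℝ) :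
    Commute (diagGauge b s) (diagonal fun j => (b j : ℂ)) :=
  commute_diagonal _ _

theorem hasDerivAt_diagGauge (b : m → ℝ) (s : ℝ) :
    HasDerivAt (diagGauge b) (-(diagonal (fun j => (b j : ℂ)) * diagGauge b s)) s := by
  rw [diagGauge, diagonal_mul_diagonal, diagonal_neg]
  refine hasDerivAt_diagonal fun j => ?_
  have h := (hasDerivAt_mul_const (b j)).fun_neg.exp.ofReal_comp (z := s)
  rwa [show ((Real.exp (-(s * b j)) * -b j : ℝ) : ℂ) = -(b j * Real.exp (-(s * b j))) by
    push_cast; ring] at h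

theorem diagGauge_conj_apply (b : m → ℝ) (s : ℝ) (R : Matrix m m ℂ) (k l : m) :
    (diagGauge b s * R * diagGauge b (-s)) k l =
      ((Real.exp (s * (b l - b k)) : ℝ) : ℂ) * R k l := by
  rw [diagGauge, diagGauge, mul_diagonal, diagonal_mul, mul_right_comm, ← Complex.ofReal_mul,
    ← Real.exp_add]
  congr 3
  ring

theorem norm_diagGauge_mul_sub_one_le [Nonempty m] (b : m → ℝ) {R Φ : ℝ → Matrix m m ℂ}
    {K L : ℝ} (hL : 0 ≤ L) (hΦ0 : Φ 0 = 1)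
    (hΦ : ∀ s ∈ Icc 0 L,
      HasDerivWithinAt Φ ((diagonal (fun j => (b j : ℂ)) + R s) * Φ s) (Icc 0 L) s)
    (hB : ∀ s ∈ Icc 0 L, ‖diagGauge b s * R s * diagGauge b (-s)‖ ≤ K) :
    ‖diagGauge b L * Φ L - 1‖ ≤ Real.exp (K * L) - 1 :=
  norm_sub_one_le_exp_sub_one_of_deriv_eq_mul hL (by simp [diagGauge, hΦ0])
    (fun s hs => (hasDerivAt_diagGauge b s).hasDerivWithinAt.gauge_mul (hΦ s hs)
      (commute_diagGauge_diagonal b s) (diagGauge_neg_mul_diagGauge b s))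
    hB

theorem norm_diagGauge_conj_le (b : m → ℝ) (w : m → m → ℝ) (R : Matrix m m ℂ)
    {s d c : ℝ} (hs : 0 ≤ s) (hsd : s ≤ d) (hc : 0 ≤ c) (hw : ∀ k l, 0 ≤ w k l)
    (hb : ∀ k l, b l - b k ≤ w k l)
    (hR : ∀ k l, ‖R k l‖ ≤ c * Real.exp (-(w k l * d))) :
    ‖diagGauge b s * R * diagGauge b (-s)‖ ≤ Fintype.card m * c := by
  refine linfty_opNorm_le_card_mul _ hc fun k l => ?_
  have hexp : s * (b l - b k) ≤ w k l * d :=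
    calc s * (b l - b k) ≤ s * w k l := mul_le_mul_of_nonneg_left (hb k l) hs
      _ ≤ w k l * d := by rw [mul_comm]; exact mul_le_mul_of_nonneg_left hsd (hw k l)
  rw [diagGauge_conj_apply, norm_mul, Complex.norm_real,
    Real.norm_of_nonneg (Real.exp_pos _).le]
  calc Real.exp (s * (b l - b k)) * ‖R k l‖
      ≤ Real.exp (w k l * d) * (c * Real.exp (-(w k l * d))) :=
        mul_le_mul (Real.exp_le_exp.2 hexp) (hR k l) (norm_nonneg _) (Real.exp_pos _).le
    _ = c := by rw [mul_left_comm, ← Real.exp_add, add_neg_cancel, Real.exp_zero, mul_one]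

end Gauge

theorem statement11_general (n : ℕ) (hn : 2 ≤ n) (θ L : ℝ) (hL : 0 < L)
    (δ : ℝ → ℝ) (hδ : ∀ s ∈ Icc (0 : ℝ) L, s < δ s)
    (C : ℝ) (hC : 0 < C) :
    ∃ C' : ℝ, 0 < C' ∧ ∃ t₀ : ℝ, 0 < t₀ ∧ ∀ t : ℝ, t₀ ≤ t →
      ∀ R : ℝ → Matrix (Fin n) (Fin n) ℂ, ContinuousOn R (Icc 0 L) →
      (∀ s ∈ Icc (0 : ℝ) L, ∀ k l : Fin n,
        ‖R s k l‖ ≤ C * t ^ (-(1 / (2 * (n : ℝ)))) *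
          Real.exp (-2 * ‖1 - zeta n ^ ((k : ℤ) - (l : ℤ))‖ *
            t ^ ((1 : ℝ) / n) * δ s)) →
      ∀ Φ : ℝ → Matrix (Fin n) (Fin n) ℂ, Φ 0 = 1 →
      (∀ s ∈ Icc (0 : ℝ) L,
        HasDerivWithinAt Φ
          ((Matrix.diagonal (fun j : Fin n =>
              ((t ^ ((1 : ℝ) / n) * (2 * Real.cos (θ + 2 * Real.pi * (j : ℝ) / n)) : ℝ) : ℂ))
            + R s) * Φ s) (Icc 0 L) s) →
      ‖Matrix.diagonal (fun j : Fin n =>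
          ((Real.exp (-(L * t ^ ((1 : ℝ) / n) *
              (2 * Real.cos (θ + 2 * Real.pi * (j : ℝ) / n)))) : ℝ) : ℂ)) * Φ L - 1‖
        ≤ C' * t ^ (-(1 / (2 * (n : ℝ)))) := by
  have : Nonempty (Fin n) := ⟨⟨0, by omega⟩⟩
  refine ⟨n * C * L * Real.exp (n * C * L), by positivity, 1, one_pos,
    fun t ht R _ hR Φ hΦ0 hΦ => ?_⟩
  set T := t ^ ((1 : ℝ) / n)
  set τ := t ^ (-(1 / (2 * (n : ℝ))))
  have hT : 0 ≤ T := by positivity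
  have hτ1 : τ ≤ 1 := Real.rpow_le_one_of_one_le_of_nonpos ht (by simp)
  set b : Fin n → ℝ := fun j => T * (2 * Real.cos (θ + 2 * Real.pi * j / n))
  have hB (s) (hs : s ∈ Icc 0 L) :
      ‖diagGauge b s * R s * diagGauge b (-s)‖ ≤ n * (C * τ) := by
    simpa only [Fintype.card_fin] using norm_diagGauge_conj_le b
      (fun k l => 2 * ‖1 - zeta n ^ ((k : ℤ) - (l : ℤ))‖ * T) (R s)
      hs.1 (hδ s hs).le (by positivity) (fun k l => by positivity)
      (fun k l => by
        simpa only [b, ← mul_sub, mul_comm _ T] using mul_le_mul_of_nonneg_left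
          (two_cos_sub_two_cos_le_norm_one_sub_zeta_zpow n k l θ) hT)
      (fun k l => (hR s hs k l).trans_eq (by ring_nf))
  have hgauge : Matrix.diagonal (fun j : Fin n =>
      ((Real.exp (-(L * T * (2 * Real.cos (θ + 2 * Real.pi * j / n)))) : ℝ) : ℂ)) =
      diagGauge b L := by
    simp only [diagGauge, b, mul_assoc]
  rw [hgauge]
  calc ‖diagGauge b L * Φ L - 1‖ ≤ Real.exp (n * (C * τ) * L) - 1 :=
        norm_diagGauge_mul_sub_one_le b hL.le hΦ0 hΦ hB
    _ ≤ n * (C * τ) * L * Real.exp (n * (C * τ) * L) := Real.exp_sub_one_le_mul_exp _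
    _ ≤ n * (C * τ) * L * Real.exp (n * C * L) := by
        gcongr
        exact mul_le_of_le_one_right hC.le hτ1
    _ = n * C * L * Real.exp (n * C * L) * τ := by ring

/-- ODE core of the parallel-transport asymptotics: with `μ_j = 2cos(θ + 2π(j−1)/n)` and a
continuous `δ` with `s < δ(s)`, for every `C > 0` there are `C′ > 0`, `t₀ > 0` so that for
`t ≥ t₀`: if `|R(s)_{kl}| ≤ C·t^{−1/(2n)}·e^{−2|1−ζ_n^{k−l}|·t^{1/n}·δ(s)}` and
`Φ(0) = Id`, `Φ′(s) = (t^{1/n}·diag(μ₁,…,μ_n) + R(s))·Φ(s)`, then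
`‖diag(e^{−L t^{1/n} μ_j}) · Φ(L) − Id‖ ≤ C′·t^{−1/(2n)}`. -/
theorem statement11 (n : ℕ) (hn : 2 ≤ n) (θ L : ℝ) (hL : 0 < L)
    (δ : ℝ → ℝ) (hδc : ContinuousOn δ (Icc 0 L)) (hδ : ∀ s ∈ Icc (0 : ℝ) L, s < δ s)
    (C : ℝ) (hC : 0 < C) :
    ∃ C' : ℝ, 0 < C' ∧ ∃ t₀ : ℝ, 0 < t₀ ∧ ∀ t : ℝ, t₀ ≤ t →
      ∀ R : ℝ → Matrix (Fin n) (Fin n) ℂ, ContinuousOn R (Icc 0 L) →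
      (∀ s ∈ Icc (0 : ℝ) L, ∀ k l : Fin n,
        ‖R s k l‖ ≤ C * t ^ (-(1 / (2 * (n : ℝ)))) *
          Real.exp (-2 * ‖1 - zeta n ^ ((k : ℤ) - (l : ℤ))‖ *
            t ^ ((1 : ℝ) / n) * δ s)) →
      ∀ Φ : ℝ → Matrix (Fin n) (Fin n) ℂ, Φ 0 = 1 →
      (∀ s ∈ Icc (0 : ℝ) L,
        HasDerivWithinAt Φ
          ((Matrix.diagonal (fun j : Fin n =>
              ((t ^ ((1 : ℝ) / n) * (2 * Real.cos (θ + 2 * Real.pi * (j : ℝ) / n)) : ℝ) : ℂ))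
            + R s) * Φ s) (Icc 0 L) s) →
      ‖Matrix.diagonal (fun j : Fin n =>
          ((Real.exp (-(L * t ^ ((1 : ℝ) / n) *
              (2 * Real.cos (θ + 2 * Real.pi * (j : ℝ) / n)))) : ℝ) : ℂ)) * Φ L - 1‖
        ≤ C' * t ^ (-(1 / (2 * (n : ℝ)))) :=
  statement11_general n hn θ L hL δ hδ C hC
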